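/- Let K be a bounded linear operator on C[0,A] with nonnegative kernel (i.e., K maps nonnegative functions to nonnegative functions and |K u| ≤ K|u| pointwise) and ‖K‖_∞ < 1. Let ℓ ∈ C[0,A] be the unique solution of ℓ = 1 + Kℓ, where 1 denotes the constant function one. Then ‖(I − K)^{-1}‖_∞ = ‖ℓ‖_∞. -/

import Mathlib

/-!
Write `w = (I - K)⁻¹ v`, so that `w = v + K w`. Then `g = |w| - ‖v‖ ℓ` satisfies `g ≤ K g`, and a
positive operator of norm `< 1` admits no such `g` with a nonzero positive part: `g⁺ ≤ K g⁺`
would force `‖g⁺‖ ≤ ‖K‖ ‖g⁺‖`. Hence `|w| ≤ ‖v‖ ℓ` and `‖(I - K)⁻¹‖ ≤ ‖ℓ‖`, while `ℓ = (I - K)⁻¹ 1`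
gives the reverse inequality.
-/

namespace ContinuousMap

variable {X β : Type*} [TopologicalSpace X] [CompactSpace X]
  [NormedAddCommGroup β] [Lattice β] [HasSolidNorm β] [IsOrderedAddMonoid β]

instance instHasSolidNorm : HasSolidNorm C(X, β) where
  solid {f g} h := (norm_le f (norm_nonneg g)).2 fun x =>
    (HasSolidNorm.solid (by simpa only [abs_apply] using le_def.1 h x)).trans (norm_coe_le_norm g x)

end ContinuousMap

section PositiveOperator

variable {E : Type*} [NormedAddCommGroup E] [Lattice E] [HasSolidNorm E] [IsOrderedAddMonoid E]
  [NormedSpace ℝ E] {K : E →L[ℝ] E}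

theorem ContinuousLinearMap.nonpos_of_le_apply_self (hK : ‖K‖ < 1)
    (hpos : ∀ u, 0 ≤ u → 0 ≤ K u) {g : E} (hg : g ≤ K g) : g ≤ 0 := by
  have hmono : Monotone K := (monotone_iff_map_nonneg K).2 hpos
  have hplus : g⁺ ≤ K g⁺ :=
    sup_le (hg.trans (hmono (le_posPart g))) (hpos _ (posPart_nonneg g))
  have hnorm : ‖g⁺‖ ≤ ‖K‖ * ‖g⁺‖ := by
    calc ‖g⁺‖ ≤ ‖K g⁺‖ := norm_le_norm_of_abs_le_abs (by
            rwa [abs_of_nonneg (posPart_nonneg g), abs_of_nonneg (hpos _ (posPart_nonneg g))])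
      _ ≤ ‖K‖ * ‖g⁺‖ := K.le_opNorm _
  have hzero : g⁺ = 0 := norm_le_zero_iff.1 (by nlinarith [norm_nonneg g⁺])
  exact posPart_eq_zero.1 hzero

end PositiveOperator

section ContinuousFunctions

variable {X : Type*} [TopologicalSpace X] [CompactSpace X] {K : C(X, ℝ) →L[ℝ] C(X, ℝ)}

theorem abs_le_norm_smul_of_eq_add_apply (hK : ‖K‖ < 1) (hpos : ∀ u, 0 ≤ u → 0 ≤ K u)
    (habs : ∀ u, |K u| ≤ K |u|) {ℓ v w : C(X, ℝ)} (hℓ : ℓ = 1 + K ℓ) (hw : w = v + K w) :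
    |w| ≤ ‖v‖ • ℓ := by
  have hv : |v| ≤ ‖v‖ • 1 := fun x => by simpa using v.norm_coe_le_norm x
  have hsub : |w| - ‖v‖ • ℓ ≤ K (|w| - ‖v‖ • ℓ) := by
    calc |w| - ‖v‖ • ℓ ≤ |v| + K |w| - ‖v‖ • ℓ := by
          gcongr
          calc |w| = |v + K w| := by rw [← hw]
            _ ≤ |v| + |K w| := abs_add_le _ _
            _ ≤ |v| + K |w| := by gcongr; exact habs w
      _ ≤ ‖v‖ • 1 + K |w| - ‖v‖ • (1 + K ℓ) := by rw [← hℓ]; gcongr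
      _ = K (|w| - ‖v‖ • ℓ) := by rw [map_sub, map_smul, smul_add]; abel
  exact sub_nonpos.1 (K.nonpos_of_le_apply_self hK hpos hsub)

theorem opNorm_le_norm_of_eq_add_apply (hK : ‖K‖ < 1) (hpos : ∀ u, 0 ≤ u → 0 ≤ K u)
    (habs : ∀ u, |K u| ≤ K |u|) {ℓ : C(X, ℝ)} (hℓ : ℓ = 1 + K ℓ) {B : C(X, ℝ) →L[ℝ] C(X, ℝ)}
    (hB : ∀ v, B v = v + K (B v)) : ‖B‖ ≤ ‖ℓ‖ := by
  refine B.opNorm_le_bound (norm_nonneg ℓ) fun v => ?_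
  have hle := abs_le_norm_smul_of_eq_add_apply hK hpos habs hℓ (hB v)
  have hnonneg : 0 ≤ ‖v‖ • ℓ := (abs_nonneg _).trans hle
  calc ‖B v‖ ≤ ‖‖v‖ • ℓ‖ := norm_le_norm_of_abs_le_abs (by rwa [abs_of_nonneg hnonneg])
    _ = ‖ℓ‖ * ‖v‖ := by rw [norm_smul, norm_norm, mul_comm]

theorem ContinuousMap.norm_one_le_one : ‖(1 : C(X, ℝ))‖ ≤ 1 :=
  (norm_le _ zero_le_one).2 fun _ => by simp

end ContinuousFunctions

theorem stmt9_general (A : ℝ)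
    (K : C(Set.Icc (0 : ℝ) A, ℝ) →L[ℝ] C(Set.Icc (0 : ℝ) A, ℝ)) (hK : ‖K‖ < 1)
    (hpos : ∀ u : C(Set.Icc (0 : ℝ) A, ℝ), (∀ x, 0 ≤ u x) → ∀ x, 0 ≤ (K u) x)
    (habs : ∀ (u : C(Set.Icc (0 : ℝ) A, ℝ)) (x), |(K u) x| ≤ (K |u|) x)
    (ℓ : C(Set.Icc (0 : ℝ) A, ℝ)) (hℓ : ℓ = 1 + K ℓ) :
    ∀ B : C(Set.Icc (0 : ℝ) A, ℝ) →L[ℝ] C(Set.Icc (0 : ℝ) A, ℝ),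
      B ∘L (1 - K) = 1 → (1 - K) ∘L B = 1 → ‖B‖ = ‖ℓ‖ := by
  intro B hBl hBr
  have hB : ∀ v, B v = v + K (B v) := fun v => by
    simpa [sub_eq_iff_eq_add] using congr($hBr v)
  have hℓ' : (1 - K) ℓ = 1 := by
    rw [sub_apply, one_apply_eq_self, sub_eq_iff_eq_add, ← hℓ]
  have hℓB : ℓ = B 1 := by
    rw [← hℓ', ← ContinuousLinearMap.comp_apply, hBl, one_apply_eq_self]
  refine le_antisymm (opNorm_le_norm_of_eq_add_apply hK (fun u hu => hpos u hu)
    (fun u x => by simpa using habs u x) hℓ hB) ?_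
  calc ‖ℓ‖ = ‖B 1‖ := by rw [hℓB]
    _ ≤ ‖B‖ * ‖(1 : C(Set.Icc (0 : ℝ) A, ℝ))‖ := B.le_opNorm 1
    _ ≤ ‖B‖ := mul_le_of_le_one_right (norm_nonneg B) ContinuousMap.norm_one_le_one

theorem stmt9 (A : ℝ) (hA : 0 < A)
    (K : C(Set.Icc (0 : ℝ) A, ℝ) →L[ℝ] C(Set.Icc (0 : ℝ) A, ℝ)) (hK : ‖K‖ < 1)
    (hpos : ∀ u : C(Set.Icc (0 : ℝ) A, ℝ), (∀ x, 0 ≤ u x) → ∀ x, 0 ≤ (K u) x)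
    (habs : ∀ (u : C(Set.Icc (0 : ℝ) A, ℝ)) (x), |(K u) x| ≤ (K |u|) x)
    (ℓ : C(Set.Icc (0 : ℝ) A, ℝ)) (hℓ : ℓ = 1 + K ℓ) :
    ∀ B : C(Set.Icc (0 : ℝ) A, ℝ) →L[ℝ] C(Set.Icc (0 : ℝ) A, ℝ),
      B ∘L (1 - K) = 1 → (1 - K) ∘L B = 1 → ‖B‖ = ‖ℓ‖ :=
  stmt9_general A K hK hpos habs ℓ hℓ
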